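/- arXiv:1910.03289 — 2 statements merged into one kernel-verified Lean document; each statement's English description precedes it below -/
import Mathlib

section
/- The sets {2+2k : k ≥ 0} ∪ {1+4k : k ≥ 0} together with all their images under iterates of E(x)=4x-1 form a partition of the positive integers; equivalently, every positive integer x can be written uniquely as E^n(y) with n ≥ 0 and y ∈ {2+2k : k ≥ 0} ∪ {1+4k : k ≥ 0}. -/
/-- The equivalence map `E(x) = 4x - 1`. -/
def E (x : ℕ) : ℕ := 4 * x - 1

/-- The base set `{2+2k : k ≥ 0} ∪ {1+4k : k ≥ 0}`. -/
def D (y : ℕ) : Prop := (∃ k : ℕ, y = 2 + 2 * k) ∨ (∃ k : ℕ, y = 1 + 4 * k)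

lemma D_pos {y : ℕ} (h : D y) : 1 ≤ y := by
  rcases h with ⟨k, rfl⟩ | ⟨k, rfl⟩ <;> omega

lemma D_mod {y : ℕ} (h : D y) : y % 4 ≠ 3 := by
  rcases h with ⟨k, rfl⟩ | ⟨k, rfl⟩ <;> omega

lemma E_pos {x : ℕ} (h : 1 ≤ x) : 1 ≤ E x := by unfold E; omega

lemma iter_pos {y : ℕ} (h : 1 ≤ y) (n : ℕ) : 1 ≤ E^[n] y := by
  induction n with
  | zero => simpa
  | succ n ih => rw [Function.iterate_succ_apply']; exact E_pos ih

lemma E_mod {x : ℕ} (h : 1 ≤ x) : E x % 4 = 3 := by unfold E; omega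

lemma E_inj {a b : ℕ} (ha : 1 ≤ a) (hb : 1 ≤ b) (h : E a = E b) : a = b := by
  unfold E at h; omega

/-- Every positive integer is uniquely of the form `E^[n] y` with
`y ∈ {2+2k} ∪ {1+4k}`: the iterated `E`-images of that set partition `ℕ ≥ 1`. -/
theorem stmt_7 (x : ℕ) (hx : 1 ≤ x) :
    ∃! p : ℕ × ℕ, D p.2 ∧ E^[p.1] p.2 = x := by
  induction x using Nat.strong_induction_on with
  | _ x IH =>
  by_cases h3 : x % 4 = 3
  · -- x = E x', x' = x/4 + 1
    set x' := x / 4 + 1 with hx'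
    have hEx' : E x' = x := by unfold E; omega
    have hx'1 : 1 ≤ x' := by omega
    have hx'lt : x' < x := by omega
    obtain ⟨⟨n, y⟩, ⟨hDy, hEq⟩, huniq⟩ := IH x' hx'lt hx'1
    refine ⟨(n + 1, y), ⟨hDy, ?_⟩, ?_⟩
    · rw [Function.iterate_succ_apply', hEq, hEx']
    · rintro ⟨m, z⟩ ⟨hDz, hEz⟩
      cases m with
      | zero =>
        simp only [Function.iterate_zero_apply] at hEz
        exact absurd (hEz ▸ h3) (D_mod hDz)
      | succ m =>
        rw [Function.iterate_succ_apply'] at hEz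
        have hzpos : 1 ≤ E^[m] z := iter_pos (D_pos hDz) m
        have : E^[m] z = x' := E_inj hzpos hx'1 (hEz.trans hEx'.symm)
        have := huniq (m, z) ⟨hDz, this⟩
        simp only [Prod.mk.injEq] at this ⊢
        exact ⟨by omega, this.2⟩
  · refine ⟨(0, x), ⟨?_, rfl⟩, ?_⟩
    · unfold D
      rcases Nat.even_or_odd x with ⟨k, hk⟩ | ⟨k, hk⟩
      · exact Or.inl ⟨k - 1, by omega⟩
      · exact Or.inr ⟨k / 2, by omega⟩
    · rintro ⟨m, z⟩ ⟨hDz, hEz⟩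
      cases m with
      | zero => simpa using hEz
      | succ m =>
        rw [Function.iterate_succ_apply'] at hEz
        exact absurd (hEz ▸ E_mod (iter_pos (D_pos hDz) m)) h3
end

section
/- For any positive integers x, x' and any n ≥ 1: if x ≡ x' (mod 3^n), then for every sequence of n applications of the inverse branches (F₁⁻¹(x)=2x/3 when 3∣x, F₂⁻¹(x)=(4x-1)/3 when x≡1 mod 3), the sequence of branches defined at x is defined at x' and vice versa; i.e., which branch (if any) of F_l⁻¹ applies at each of the first n steps depends only on x mod 3^n. -/
/-- One step of the inverse map, recording definedness: `2x/3` when `3 ∣ x`,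
`(4x-1)/3` when `x ≡ 1 (mod 3)`, undefined when `x ≡ 2 (mod 3)`. -/
def step (x : ℕ) : Option ℕ :=
  if x % 3 = 0 then some (2 * x / 3)
  else if x % 3 = 1 then some ((4 * x - 1) / 3) else none

/-- `i`-fold iteration of `step`, propagating undefinedness. -/
def iterStep : ℕ → ℕ → Option ℕ
  | 0, x => some x
  | n + 1, x => (iterStep n x).bind step

lemma key_step (k x x' : ℕ) (h : x % 3 ^ (k + 1) = x' % 3 ^ (k + 1)) :
    (step x).map (· % 3 ^ k) = (step x').map (· % 3 ^ k) := by
  have hp : (3 : ℕ) ^ (k + 1) = 3 * 3 ^ k := by ring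
  have d : (3 : ℕ) ∣ 3 ^ (k + 1) := dvd_pow_self 3 (Nat.succ_ne_zero k)
  have h3 : x % 3 = x' % 3 := by
    calc x % 3 = x % 3 ^ (k + 1) % 3 := (Nat.mod_mod_of_dvd x d).symm
      _ = x' % 3 ^ (k + 1) % 3 := by rw [h]
      _ = x' % 3 := Nat.mod_mod_of_dvd x' d
  by_cases h0 : x % 3 = 0
  · have h0' : x' % 3 = 0 := h3 ▸ h0
    obtain ⟨a, rfl⟩ := Nat.dvd_of_mod_eq_zero h0
    obtain ⟨a', rfl⟩ := Nat.dvd_of_mod_eq_zero h0'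
    have ha : a % 3 ^ k = a' % 3 ^ k := by
      rw [hp, Nat.mul_mod_mul_left, Nat.mul_mod_mul_left] at h
      omega
    have e1 : 2 * (3 * a) / 3 = 2 * a := by omega
    have e2 : 2 * (3 * a') / 3 = 2 * a' := by omega
    simp only [step, h0, h0', if_pos, Option.map_some, e1, e2]
    exact congrArg some (Nat.ModEq.mul_left 2 ha)
  · by_cases h1 : x % 3 = 1
    · have h1' : x' % 3 = 1 := h3 ▸ h1
      obtain ⟨a, rfl⟩ : ∃ a, x = 3 * a + 1 := ⟨x / 3, by omega⟩
      obtain ⟨a', rfl⟩ : ∃ a', x' = 3 * a' + 1 := ⟨x' / 3, by omega⟩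
      have hm : (3 * a) % 3 ^ (k + 1) = (3 * a') % 3 ^ (k + 1) :=
        Nat.ModEq.add_right_cancel' 1 h
      have ha : a % 3 ^ k = a' % 3 ^ k := by
        rw [hp, Nat.mul_mod_mul_left, Nat.mul_mod_mul_left] at hm
        omega
      have h0' : ¬ (3 * a' + 1) % 3 = 0 := by omega
      have e1 : (4 * (3 * a + 1) - 1) / 3 = 4 * a + 1 := by omega
      have e2 : (4 * (3 * a' + 1) - 1) / 3 = 4 * a' + 1 := by omega
      simp only [step, h0, h0', h1, h1', if_neg, if_pos, Option.map_some, e1, e2,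
        reduceCtorEq, ite_false, ite_true, one_ne_zero]
      exact congrArg some ((Nat.ModEq.mul_left 4 ha).add_right 1)
    · have h0' : ¬ x' % 3 = 0 := h3 ▸ h0
      have h1' : ¬ x' % 3 = 1 := h3 ▸ h1
      simp [step, h0, h0', h1, h1']

lemma iterCong : ∀ (i m x x' : ℕ), x % 3 ^ (i + m) = x' % 3 ^ (i + m) →
    (iterStep i x).map (· % 3 ^ m) = (iterStep i x').map (· % 3 ^ m)
  | 0, m, x, x', h => by simpa [iterStep] using h
  | i + 1, m, x, x', h => by
    have h' : (iterStep i x).map (· % 3 ^ (m + 1)) = (iterStep i x').map (· % 3 ^ (m + 1)) :=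
      iterCong i (m + 1) x x' (by rwa [show i + (m + 1) = i + 1 + m by ring])
    cases hy : iterStep i x with
    | none =>
      cases hy' : iterStep i x' with
      | none => simp [iterStep, hy, hy']
      | some y' => rw [hy, hy'] at h'; simp at h'
    | some y =>
      cases hy' : iterStep i x' with
      | none => rw [hy, hy'] at h'; simp at h'
      | some y' =>
        rw [hy, hy'] at h'
        simp only [Option.map_some, Option.some.injEq] at h'
        show ((iterStep i x).bind step).map _ = ((iterStep i x').bind step).map _
        rw [hy, hy']
        simpa using key_step m y y' h'

/-- y-proportionality: which inverse branch (if any) applies at each of the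
first `n` steps depends only on `x mod 3^n`. -/
theorem stmt_15 (n : ℕ) (hn : 1 ≤ n) (x x' : ℕ) (hx : 1 ≤ x) (hx' : 1 ≤ x')
    (h : x % 3 ^ n = x' % 3 ^ n) :
    ∀ i < n, (iterStep i x).map (· % 3) = (iterStep i x').map (· % 3) := by
  intro i hi
  have d : (3 : ℕ) ^ (i + 1) ∣ 3 ^ n := pow_dvd_pow 3 hi
  have hmod : x % 3 ^ (i + 1) = x' % 3 ^ (i + 1) := by
    calc x % 3 ^ (i + 1) = x % 3 ^ n % 3 ^ (i + 1) := (Nat.mod_mod_of_dvd x d).symm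
      _ = x' % 3 ^ n % 3 ^ (i + 1) := by rw [h]
      _ = x' % 3 ^ (i + 1) := Nat.mod_mod_of_dvd x' d
  simpa using iterCong i 1 x x' hmod
end
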